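/- arXiv:1803.11153 — 4 statements merged into one kernel-verified Lean document; each statement's English description precedes it below -/
import Mathlib

section
/- Let H be the Heisenberg group with center Z(H) = exp(ℝZ), and let γ ≠ 0. For any Schwartz function f on H, (2π/|γ|) ∫_ℝ ∫_H f(exp(tZ)·h) conj(f(h)) e^{itγ} dh dt = (2π/|γ|) ∫_{ℝ²} |∫_ℝ f(exp(xX+yY+zZ)) e^{izγ} dz|² dy dx ≥ 0. In particular the Kirillov character of the orbit Z* = γ is positive on convolutions f * f*. -/
/-! Write `G_p z = f (p, z) e^{izγ}` for `p ∈ ℝ²`; the integrand is then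
`conj (G_p z) · G_p (z + t)`. A Schwartz function has uniformly bounded `L¹` norms along the
vertical lines `z ↦ f (p, z)`, which makes the whole integrand integrable on `ℝ × ℝ³`, so we may
integrate in `t` first. By translation invariance the `t`-integral is `∫ G_p`, and the
`(z, t)`-integral becomes `conj (∫ G_p) · ∫ G_p = ‖∫ G_p‖²`. -/

open MeasureTheory Complex ComplexConjugate

theorem SchwartzMap.exists_norm_le_mul_inv_one_add_sq {E F : Type*} [NormedAddCommGroup E]
    [NormedSpace ℝ E] [NormedAddCommGroup F] [NormedSpace ℝ F] (f : SchwartzMap E F) :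
    ∃ C, ∀ w, ‖f w‖ ≤ C * (1 + ‖w‖ ^ 2)⁻¹ := by
  refine ⟨SchwartzMap.seminorm ℝ 0 0 f + SchwartzMap.seminorm ℝ 2 0 f, fun w => ?_⟩
  rw [← div_eq_mul_inv, le_div_iff₀ (by positivity)]
  linarith [f.norm_le_seminorm ℝ w, f.norm_pow_mul_le_seminorm ℝ 2 w]

theorem SchwartzMap.exists_norm_le_mul_inv_one_add_sq_vertical {F : Type*} [NormedAddCommGroup F]
    [NormedSpace ℝ F] (f : SchwartzMap (ℝ × ℝ × ℝ) F) :
    ∃ C, ∀ x y z, ‖f (x, y, z)‖ ≤ C * (1 + z ^ 2)⁻¹ := by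
  obtain ⟨C, hC⟩ := f.exists_norm_le_mul_inv_one_add_sq
  refine ⟨C, fun x y z => (hC _).trans ?_⟩
  have hC0 : 0 ≤ C := by simpa using (norm_nonneg (f 0)).trans (hC 0)
  have hz : z ^ 2 ≤ ‖((x, y, z) : ℝ × ℝ × ℝ)‖ ^ 2 := by
    rw [← sq_abs, ← Real.norm_eq_abs]
    gcongr
    exact (norm_snd_le (y, z)).trans (norm_snd_le (x, y, z))
  gcongr

theorem exp_I_mul_mul_add (γ z t : ℝ) :
    exp (I * t * γ) = conj (exp (I * z * γ)) * exp (I * ↑(z + t) * γ) := by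
  rw [← exp_conj, ← exp_add]
  congr 1
  simp only [map_mul, conj_I, conj_ofReal]
  push_cast
  ring

theorem integral_prod_assoc {α β γ E : Type*} [MeasurableSpace α] [MeasurableSpace β]
    [MeasurableSpace γ] [NormedAddCommGroup E] [NormedSpace ℝ E] {μ : Measure α}
    {ν : Measure β} {ρ : Measure γ} [SFinite μ] [SFinite ν] [SFinite ρ] {φ : α × β × γ → E}
    (hφ : Integrable φ (μ.prod (ν.prod ρ))) :
    ∫ v, φ v ∂(μ.prod (ν.prod ρ)) = ∫ p, ∫ z, φ (p.1, p.2, z) ∂ρ ∂(μ.prod ν) := by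
  have h := measurePreserving_prodAssoc μ ν ρ
  have he := (MeasurableEquiv.prodAssoc : (α × β) × γ ≃ᵐ α × β × γ).measurableEmbedding
  rw [← h.integral_comp he]
  exact integral_prod _ ((h.integrable_comp_emb he).mpr hφ)

theorem integral_integral_conj_mul_add {G 𝕜 : Type*} [AddGroup G] [MeasurableSpace G]
    [MeasurableAdd G] [RCLike 𝕜] {μ : Measure G} [μ.IsAddLeftInvariant] (F : G → 𝕜) :
    ∫ z, ∫ t, conj (F z) * F (z + t) ∂μ ∂μ = ((‖∫ z, F z ∂μ‖ ^ 2 : ℝ) : 𝕜) := by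
  simp_rw [integral_const_mul, integral_add_left_eq_self F, integral_mul_const, integral_conj]
  rw [RCLike.conj_mul, RCLike.ofReal_pow]

section Vertical

variable {E : Type*} [NormedAddCommGroup E] {g : ℝ × ℝ × ℝ → E} {C : ℝ}

theorem integrable_vertical_of_norm_le (hg : Continuous g)
    (hC : ∀ x y z, ‖g (x, y, z)‖ ≤ C * (1 + z ^ 2)⁻¹) (x y : ℝ) :
    Integrable fun z => g (x, y, z) :=
  (integrable_inv_one_add_sq.const_mul C).mono'
    (by fun_prop : Continuous fun z : ℝ => g (x, y, z)).aestronglyMeasurable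
    (ae_of_all _ (hC x y))

theorem integral_norm_vertical_le (hC : ∀ x y z, ‖g (x, y, z)‖ ≤ C * (1 + z ^ 2)⁻¹) (x y : ℝ) :
    ∫ z, ‖g (x, y, z)‖ ≤ C * Real.pi := by
  rw [← integral_univ_inv_one_add_sq, ← integral_const_mul]
  exact integral_mono_of_nonneg (ae_of_all _ fun _ => norm_nonneg _)
    (integrable_inv_one_add_sq.const_mul C) (ae_of_all _ (hC x y))

end Vertical

section VerticalAutocorrelation

variable {g : ℝ × ℝ × ℝ → ℂ} {C : ℝ}

theorem integrable_vertical_autocorrelation (γ : ℝ) (hg : Continuous g) (hint : Integrable g)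
    (hline : ∀ x y, Integrable fun z => g (x, y, z)) (hC : ∀ x y, ∫ z, ‖g (x, y, z)‖ ≤ C) :
    Integrable (Function.uncurry fun (t : ℝ) (v : ℝ × ℝ × ℝ) =>
      g (v.1, v.2.1, v.2.2 + t) * conj (g v) * exp (I * t * γ)) (volume.prod volume) := by
  have hcont : Continuous (Function.uncurry fun (t : ℝ) (v : ℝ × ℝ × ℝ) =>
      g (v.1, v.2.1, v.2.2 + t) * conj (g v) * exp (I * t * γ)) := by
    fun_prop
  have hnorm : ∀ (t : ℝ) (v : ℝ × ℝ × ℝ),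
      ‖g (v.1, v.2.1, v.2.2 + t) * conj (g v) * exp (I * t * γ)‖ =
        ‖g (v.1, v.2.1, v.2.2 + t)‖ * ‖g v‖ := by
    simp [norm_exp]
  rw [integrable_prod_iff' hcont.aestronglyMeasurable]
  refine ⟨ae_of_all _ fun v => ?_, ?_⟩
  · refine (((hline v.1 v.2.1).comp_add_left v.2.2).norm.mul_const ‖g v‖).mono'
      (by fun_prop : Continuous _).aestronglyMeasurable (ae_of_all _ fun t => (hnorm t v).le)
  · refine (hint.norm.const_mul C).mono'
      hcont.norm.stronglyMeasurable.integral_prod_left'.aestronglyMeasurable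
      (ae_of_all _ fun v => ?_)
    simp only [Function.uncurry_apply_pair, hnorm]
    rw [integral_mul_const, integral_add_left_eq_self (fun z => ‖g (v.1, v.2.1, z)‖),
      Real.norm_of_nonneg (by positivity)]
    exact mul_le_mul_of_nonneg_right (hC _ _) (norm_nonneg _)

theorem integral_vertical_autocorrelation (γ : ℝ) (hg : Continuous g) (hint : Integrable g)
    (hline : ∀ x y, Integrable fun z => g (x, y, z)) (hC : ∀ x y, ∫ z, ‖g (x, y, z)‖ ≤ C) :
    ∫ t : ℝ, ∫ v : ℝ × ℝ × ℝ, g (v.1, v.2.1, v.2.2 + t) * conj (g v) * exp (I * t * γ)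
      = ((∫ p : ℝ × ℝ, ‖∫ z, g (p.1, p.2, z) * exp (I * z * γ)‖ ^ 2 : ℝ) : ℂ) := by
  have hΨ := integrable_vertical_autocorrelation γ hg hint hline hC
  have htwist : ∀ (p : ℝ × ℝ) (z t : ℝ),
      g (p.1, p.2, z + t) * conj (g (p.1, p.2, z)) * exp (I * t * γ) =
        conj (g (p.1, p.2, z) * exp (I * z * γ)) *
          (g (p.1, p.2, z + t) * exp (I * ↑(z + t) * γ)) := by
    intro p z t
    rw [exp_I_mul_mul_add γ z t, map_mul]
    ring
  have hfiber := hΨ.integral_prod_right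
  simp only [Function.uncurry_apply_pair] at hfiber
  refine (integral_integral_swap hΨ).trans ((integral_prod_assoc hfiber).trans ?_)
  rw [← integral_complex_ofReal]
  simp_rw [htwist]
  refine integral_congr_ae (ae_of_all _ fun p => ?_)
  exact integral_integral_conj_mul_add (fun z : ℝ => g (p.1, p.2, z) * exp (I * z * γ))

end VerticalAutocorrelation

theorem statement10_general (γ : ℝ) (f : SchwartzMap (ℝ × ℝ × ℝ) ℂ) :
    ((2 * Real.pi / |γ| : ℝ) : ℂ) *
        ∫ t : ℝ, ∫ v : ℝ × ℝ × ℝ,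
          f (v.1, v.2.1, v.2.2 + t) * (starRingEnd ℂ) (f v) * Complex.exp (Complex.I * t * γ)
      = (((2 * Real.pi / |γ| : ℝ) *
          ∫ p : ℝ × ℝ, ‖∫ z : ℝ, f (p.1, p.2, z) * Complex.exp (Complex.I * z * γ)‖ ^ 2 : ℝ) : ℂ) ∧
    0 ≤ (2 * Real.pi / |γ| : ℝ) *
          ∫ p : ℝ × ℝ, ‖∫ z : ℝ, f (p.1, p.2, z) * Complex.exp (Complex.I * z * γ)‖ ^ 2 := by
  obtain ⟨C, hC⟩ := f.exists_norm_le_mul_inv_one_add_sq_vertical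
  -- instance search does not find this for the iterated product
  have : (volume : Measure (ℝ × ℝ × ℝ)).IsAddHaarMeasure := Measure.prod.instIsAddHaarMeasure _ _
  refine ⟨?_, mul_nonneg (by positivity) (integral_nonneg fun p => by positivity)⟩
  rw [ofReal_mul, integral_vertical_autocorrelation γ f.continuous f.integrable
    (integrable_vertical_of_norm_le f.continuous hC) (integral_norm_vertical_le hC)]

/-- For the Heisenberg group in exponential coordinates
(`exp(tZ)·exp(xX+yY+zZ) = exp(xX+yY+(z+t)Z)` since `Z` is central) and `γ ≠ 0`, for any
Schwartz function `f`:
`(2π/|γ|) ∫_ℝ ∫_H f(exp(tZ)h) conj(f h) e^{itγ} dh dt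
  = (2π/|γ|) ∫_{ℝ²} |∫_ℝ f(exp(xX+yY+zZ)) e^{izγ} dz|² dy dx ≥ 0`;
in particular the Kirillov character of the orbit `Z* = γ` is positive on `f * f*`. -/
theorem statement10 (γ : ℝ) (hγ : γ ≠ 0) (f : SchwartzMap (ℝ × ℝ × ℝ) ℂ) :
    ((2 * Real.pi / |γ| : ℝ) : ℂ) *
        ∫ t : ℝ, ∫ v : ℝ × ℝ × ℝ,
          f (v.1, v.2.1, v.2.2 + t) * (starRingEnd ℂ) (f v) * Complex.exp (Complex.I * t * γ)
      = (((2 * Real.pi / |γ| : ℝ) *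
          ∫ p : ℝ × ℝ, ‖∫ z : ℝ, f (p.1, p.2, z) * Complex.exp (Complex.I * z * γ)‖ ^ 2 : ℝ) : ℂ) ∧
    0 ≤ (2 * Real.pi / |γ| : ℝ) *
          ∫ p : ℝ × ℝ, ‖∫ z : ℝ, f (p.1, p.2, z) * Complex.exp (Complex.I * z * γ)‖ ^ 2 :=
  statement10_general γ f
end

section
/- Let G be a connected nilpotent Lie group, ℓ ∈ 𝔤*, 𝔪 a polarizing subalgebra subordinate to ℓ, and M = exp 𝔪. Suppose the Kirillov character of the orbit O through ℓ admits the representation χ_O(f) = ∫_{G/M} ∫_M f(xpx⁻¹) e^{iℓ(log p)} dp dxM for Schwartz f. Then for every Schwartz function f on G, χ_O(f * f*) = ∫_{G/M} ∫_{G/M} |∫_M f(xp⁻¹y⁻¹) e^{−iℓ(log p)} dp|² dyM dxM ≥ 0. -/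
/-!
Fix `x = q.out`, put `k y = f (x * y⁻¹)`, let `ψ = e^{-iL}` (a unitary character of `M`) and
`A y = ∫_M k (y p) ψ p dp`, so that the inner integral on the right is `‖A (y.out)‖²`.
Substituting `y ↦ x g⁻¹ y⁻¹` in `(f * f*)(x g x⁻¹)` (this uses unimodularity of `G`) and
exchanging the two integrals gives `∫_M (f * f*)(x p x⁻¹) e^{iL p} dp = ∫_G k · conj A`.
Since `A (y s) = conj (ψ s) · A y` for `s ∈ M`, Weil's formula turns the latter into
`∫_{G/M} A · conj A = ∫_{G/M} ‖A‖²`.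

`L` is not assumed measurable. A character that is measurable on one nonempty open set is
locally integrable by translation. So if `e^{iL}` is not locally integrable, multiplying it by
a nonzero continuous function gives a non-measurable integrand, whose Bochner integral is `0`
by convention, and both sides vanish.
-/

open MeasureTheory Complex Set Filter Topology ComplexConjugate Pointwise

theorem integral_mul_eq_zero_of_forall_not_aestronglyMeasurable {X : Type*}
    [TopologicalSpace X] [MeasurableSpace X] [OpensMeasurableSpace X] {μ : Measure X}
    {φ : X → ℂ}
    (hφ : ∀ U : Set X, IsOpen U → U.Nonempty → ¬ AEStronglyMeasurable φ (μ.restrict U))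
    {g : X → ℂ} (hg : Continuous g) : ∫ x, g x * φ x ∂μ = 0 := by
  rcases eq_empty_or_nonempty {x | g x ≠ 0} with hempty | hne
  · have hg0 : ∀ x, g x = 0 := fun x ↦ by_contra fun h ↦ hempty.subset h
    simp [hg0]
  · refine integral_non_aestronglyMeasurable fun hgφ ↦ ?_
    have hU : IsOpen {x | g x ≠ 0} := isOpen_ne_fun hg continuous_const
    refine hφ _ hU hne (((hg.continuousOn.inv₀ fun x hx ↦ hx).aestronglyMeasurable
      hU.measurableSet).mul hgφ.restrict |>.congr ?_)
    filter_upwards [ae_restrict_mem hU.measurableSet] with x hx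
    simp [inv_mul_cancel_left₀ hx]

theorem continuous_integral_mul_of_locallyIntegrable {X Y : Type*} [TopologicalSpace X]
    [WeaklyLocallyCompactSpace X] [TopologicalSpace Y] [MeasurableSpace Y]
    [OpensMeasurableSpace Y] {μ : Measure Y} {F : X → Y → ℂ} (hF : Continuous F.uncurry)
    (hsupp : ∀ s : Set X, IsCompact s →
      ∃ K : Set Y, IsCompact K ∧ ∀ x ∈ s, ∀ y ∉ K, F x y = 0)
    {ρ : Y → ℂ} (hρ : LocallyIntegrable ρ μ) :
    Continuous fun x ↦ ∫ y, F x y * ρ y ∂μ := by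
  refine continuous_iff_continuousAt.2 fun x ↦ ?_
  obtain ⟨s, hs, hsx⟩ := exists_compact_mem_nhds x
  obtain ⟨K, hK, hFK⟩ := hsupp s hs
  have := continuousOn_integral_bilinear_of_locally_integrable_of_compact_support
    (ContinuousLinearMap.mul ℂ ℂ).flip hK hF.continuousOn (fun x y hx hy ↦ hFK x hx y hy)
    (hρ.integrableOn_isCompact hK) (μ := μ)
  simpa [mul_comm] using this.continuousAt hsx

/- Haar measures on groups that are not σ-compact need not be s-finite, so Fubini can only be
applied to restrictions to compact sets. -/
theorem integral_integral_swap_of_forall_ne_zero_mem {α β E : Type*} [MeasurableSpace α]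
    [MeasurableSpace β] [NormedAddCommGroup E] [NormedSpace ℝ E] {μ : Measure α}
    {ν : Measure β} {s : Set α} {t : Set β} [SFinite (μ.restrict s)] [SFinite (ν.restrict t)]
    {F : α → β → E}
    (hF : ∀ a b, F a b ≠ 0 → a ∈ s ∧ b ∈ t)
    (hint : Integrable (Function.uncurry F) ((μ.restrict s).prod (ν.restrict t))) :
    ∫ a, ∫ b, F a b ∂ν ∂μ = ∫ b, ∫ a, F a b ∂μ ∂ν := by
  have hs : ∀ a ∉ s, ∀ b, F a b = 0 := fun a ha b ↦ by_contra fun h ↦ ha (hF a b h).1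
  have ht : ∀ b ∉ t, ∀ a, F a b = 0 := fun b hb a ↦ by_contra fun h ↦ hb (hF a b h).2
  have inner_b (a : α) : ∫ b in t, F a b ∂ν = ∫ b, F a b ∂ν :=
    setIntegral_eq_integral_of_forall_compl_eq_zero fun b hb ↦ ht b hb a
  have inner_a (b : β) : ∫ a in s, F a b ∂μ = ∫ a, F a b ∂μ :=
    setIntegral_eq_integral_of_forall_compl_eq_zero fun a ha ↦ hs a ha b
  have outer_a : ∫ a in s, ∫ b, F a b ∂ν ∂μ = ∫ a, ∫ b, F a b ∂ν ∂μ :=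
    setIntegral_eq_integral_of_forall_compl_eq_zero fun a ha ↦ by simp [hs a ha]
  have outer_b : ∫ b in t, ∫ a, F a b ∂μ ∂ν = ∫ b, ∫ a, F a b ∂μ ∂ν :=
    setIntegral_eq_integral_of_forall_compl_eq_zero fun b hb ↦ by simp [ht b hb]
  calc ∫ a, ∫ b, F a b ∂ν ∂μ = ∫ a in s, ∫ b in t, F a b ∂ν ∂μ := by
        simp_rw [inner_b, outer_a]
    _ = ∫ b in t, ∫ a in s, F a b ∂μ ∂ν := integral_integral_swap hint
    _ = ∫ b, ∫ a, F a b ∂μ ∂ν := by simp_rw [inner_a, outer_b]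

namespace MeasureTheory

variable {G : Type*} [Group G] [TopologicalSpace G] [IsTopologicalGroup G]
  [LocallyCompactSpace G] [MeasurableSpace G] [BorelSpace G]
  (μ : Measure G) [μ.IsHaarMeasure] [μ.IsMulRightInvariant]

theorem Measure.haarScalarFactor_inv_eq_one : haarScalarFactor μ.inv μ = 1 := by
  obtain ⟨K, hK, hKnhds⟩ := exists_compact_mem_nhds (1 : G)
  have hS : IsCompact (K ∪ K⁻¹) := hK.union hK.inv
  have hpos : μ (K ∪ K⁻¹) ≠ 0 :=
    (measure_pos_of_mem_nhds μ (mem_of_superset hKnhds subset_union_left)).ne'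
  have h := measure_isMulInvariant_eq_smul_of_isCompact_closure μ.inv μ
    (hS.closure_of_subset subset_rfl)
  rw [inv_apply, union_inv, inv_inv, union_comm, ENNReal.smul_def, smul_eq_mul] at h
  exact_mod_cast (ENNReal.mul_left_inj hpos hS.measure_lt_top.ne).1 (h.symm.trans (one_mul _).symm)

/- Haar measures need not be inner regular, so `μ.inv = μ` is only available on compact sets. -/
theorem Measure.inv_restrict_eq_restrict_of_isCompact {K : Set G} (hK : IsCompact K) :
    μ.inv.restrict K = μ.restrict K := by
  ext s hs
  rw [restrict_apply hs, restrict_apply hs,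
    measure_isMulInvariant_eq_smul_of_isCompact_closure μ.inv μ
      (hK.closure_of_subset inter_subset_right), haarScalarFactor_inv_eq_one, one_smul]

theorem integral_comp_inv_of_hasCompactSupport {E : Type*} [NormedAddCommGroup E]
    [NormedSpace ℝ E] {g : G → E} (hg : HasCompactSupport g) :
    ∫ y, g y⁻¹ ∂μ = ∫ y, g y ∂μ := by
  have hvanish : ∀ y ∉ tsupport g, g y = 0 := fun y hy ↦ image_eq_zero_of_notMem_tsupport hy
  calc ∫ y, g y⁻¹ ∂μ = ∫ y, g y ∂μ.inv :=
        (integral_map_equiv (MeasurableEquiv.inv G) g).symm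
    _ = ∫ y in tsupport g, g y ∂μ.inv :=
        (setIntegral_eq_integral_of_forall_compl_eq_zero hvanish).symm
    _ = ∫ y in tsupport g, g y ∂μ := by rw [μ.inv_restrict_eq_restrict_of_isCompact hg]
    _ = ∫ y, g y ∂μ := setIntegral_eq_integral_of_forall_compl_eq_zero hvanish

end MeasureTheory

section Character

variable {H : Type*} [Group H] [TopologicalSpace H] [IsTopologicalGroup H]
  [WeaklyLocallyCompactSpace H] [MeasurableSpace H] [BorelSpace H]
  {μ : Measure H} [μ.IsMulLeftInvariant] [IsFiniteMeasureOnCompacts μ]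

theorem MonoidHom.locallyIntegrable_coe_circle_of_aestronglyMeasurable (χ : H →* Circle)
    {U : Set H} (hU : IsOpen U) (hUne : U.Nonempty)
    (hχ : AEStronglyMeasurable (fun p ↦ (χ p : ℂ)) (μ.restrict U)) :
    LocallyIntegrable (fun p ↦ (χ p : ℂ)) μ := by
  obtain ⟨u, hu⟩ := hUne
  intro z
  set g : H := u * z⁻¹
  have htrans :
      AEStronglyMeasurable (fun p ↦ (χ p : ℂ)) (μ.restrict ((g * ·) ⁻¹' U)) := by
    have := hχ.comp_measurePreserving
      ((measurePreserving_mul_left μ g).restrict_preimage hU.measurableSet)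
    refine (this.const_mul ((χ g)⁻¹ : ℂ)).congr (Eventually.of_forall fun p ↦ ?_)
    simp [map_mul]
  obtain ⟨K, hK, hKz⟩ := exists_compact_mem_nhds z
  refine ⟨(g * ·) ⁻¹' U ∩ K, inter_mem ?_ hKz, ?_⟩
  · exact (hU.preimage (continuous_const_mul g)).mem_nhds (by simpa [g] using hu)
  · exact IntegrableOn.of_bound ((measure_mono inter_subset_right).trans_lt hK.measure_lt_top)
      (htrans.mono_measure (Measure.restrict_mono inter_subset_left le_rfl)) 1
      (Eventually.of_forall fun p ↦ (Circle.norm_coe _).le)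

theorem MonoidHom.integral_mul_coe_circle_eq_zero_of_not_locallyIntegrable (χ : H →* Circle)
    (hχ : ¬ LocallyIntegrable (fun p ↦ (χ p : ℂ)) μ) {g : H → ℂ} (hg : Continuous g) :
    ∫ p, g p * χ p ∂μ = 0 :=
  integral_mul_eq_zero_of_forall_not_aestronglyMeasurable
    (fun _ hU hne h ↦ hχ (χ.locallyIntegrable_coe_circle_of_aestronglyMeasurable hU hne h)) hg

end Character

noncomputable def expCharacter {M : Type*} [Monoid M] (L : M → ℝ)
    (hL : ∀ p q, L (p * q) = L p + L q) : M →* Circle where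
  toFun p := Circle.exp (L p)
  map_one' := by rw [show L 1 = 0 by simpa using hL 1 1, Circle.exp_zero]
  map_mul' p q := by rw [hL, Circle.exp_add]

section TwistedAverage

variable {G : Type*} [Group G] [MeasurableSpace G] {M : Subgroup G} (μM : Measure M)
  (ψ : M →* Circle)

noncomputable def twistedAverage (k : G → ℂ) (y : G) : ℂ := ∫ p, k (y * p) * ψ p ∂μM

variable [TopologicalSpace G] [IsTopologicalGroup G] [BorelSpace G]

theorem twistedAverage_mul_coe [μM.IsMulLeftInvariant] (k : G → ℂ) (y : G) (s : M) :
    twistedAverage μM ψ k (y * s) = conj (ψ s : ℂ) * twistedAverage μM ψ k y := by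
  rw [twistedAverage, twistedAverage, ← integral_const_mul,
    ← integral_mul_left_eq_self _ s⁻¹]
  congr 1
  ext p
  simp [mul_assoc, ← Circle.coe_inv_eq_conj]
  ring

theorem continuous_twistedAverage [LocallyCompactSpace G] (hM : IsClosed (M : Set G))
    (hψ : LocallyIntegrable (fun p ↦ (ψ p : ℂ)) μM) {k : G → ℂ} (hk : Continuous k)
    (hkc : HasCompactSupport k) : Continuous (twistedAverage μM ψ k) := by
  refine continuous_integral_mul_of_locallyIntegrable (F := fun y (p : M) ↦ k (y * p))
    (by fun_prop) (fun s hs ↦ ?_) hψ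
  refine ⟨Subtype.val ⁻¹' (s⁻¹ * tsupport k),
    hM.isClosedEmbedding_subtypeVal.isCompact_preimage (hs.inv.mul hkc),
    fun y hy p hp ↦ image_eq_zero_of_notMem_tsupport fun h ↦ hp ?_⟩
  exact ⟨y⁻¹, inv_mem_inv.2 hy, y * p, h, by group⟩

theorem integral_integral_mul_conj_eq_integral_mul_conj_twistedAverage
    (hM : IsClosed (M : Set G)) [IsFiniteMeasureOnCompacts μM]
    (μ : Measure G) [IsFiniteMeasureOnCompacts μ]
    (hψ : LocallyIntegrable (fun p ↦ (ψ p : ℂ)) μM) {k : G → ℂ} (hk : Continuous k)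
    (hkc : HasCompactSupport k) :
    ∫ p : M, (∫ y, k y * conj (k (y * p)) ∂μ) * conj (ψ p : ℂ) ∂μM
      = ∫ y, k y * conj (twistedAverage μM ψ k y) ∂μ := by
  set T := tsupport k
  set S : Set M := Subtype.val ⁻¹' closure (T⁻¹ * T)
  have hS : IsCompact S :=
    hM.isClosedEmbedding_subtypeVal.isCompact_preimage (hkc.inv.mul hkc).closure
  have : IsFiniteMeasure (μM.restrict S) := isFiniteMeasure_restrict.2 hS.measure_ne_top
  have : IsFiniteMeasure (μ.restrict T) := isFiniteMeasure_restrict.2 hkc.measure_ne_top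
  obtain ⟨C, hC⟩ := hk.bounded_above_of_compact_support hkc
  have hsupp : ∀ (p : M) y, k y * conj (k (y * p)) ≠ 0 → p ∈ S ∧ y ∈ T := by
    intro p y h
    have hy : y ∈ T := subset_tsupport k fun h0 ↦ h (by simp [h0])
    have hyp : y * p ∈ T := subset_tsupport k fun h0 ↦ h (by simp [h0])
    exact ⟨subset_closure ⟨y⁻¹, inv_mem_inv.2 hy, y * p, hyp, by group⟩, hy⟩
  have hcompact : HasCompactSupport fun z : M × G ↦ k z.2 * conj (k (z.2 * z.1)) :=
    HasCompactSupport.intro' (hS.prod hkc)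
      ((isClosed_closure.preimage continuous_subtype_val).prod (isClosed_tsupport k))
      fun z hz ↦ by_contra fun h ↦ hz (hsupp z.1 z.2 h)
  have hψS : Integrable (fun p : M ↦ conj (ψ p : ℂ)) (μM.restrict S) :=
    IntegrableOn.of_bound hS.measure_lt_top
      (hψ.integrableOn_isCompact hS).aestronglyMeasurable.star 1
      (Eventually.of_forall fun p ↦ by simp [Circle.norm_coe])
  have hint : Integrable (fun z : M × G ↦ k z.2 * conj (k (z.2 * z.1)) * conj (ψ z.1 : ℂ))
      ((μM.restrict S).prod (μ.restrict T)) := by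
    refine ((hψS.mul_prod (integrable_const (1 : ℂ))).bdd_mul (c := C * C)
      (hcompact.stronglyMeasurable_of_prod (by fun_prop)).aestronglyMeasurable
      (Eventually.of_forall fun z ↦ ?_)).congr (Eventually.of_forall fun z ↦ by simp)
    simpa using mul_le_mul (hC z.2) (hC (z.2 * z.1)) (norm_nonneg _)
      ((norm_nonneg _).trans (hC 1))
  calc ∫ p : M, (∫ y, k y * conj (k (y * p)) ∂μ) * conj (ψ p : ℂ) ∂μM
      = ∫ p : M, ∫ y, k y * conj (k (y * p)) * conj (ψ p : ℂ) ∂μ ∂μM := by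
        simp_rw [integral_mul_const]
    _ = ∫ y, ∫ p : M, k y * conj (k (y * p)) * conj (ψ p : ℂ) ∂μM ∂μ :=
        integral_integral_swap_of_forall_ne_zero_mem
          (fun p y h ↦ hsupp p y (left_ne_zero_of_mul h)) hint
    _ = ∫ y, k y * conj (twistedAverage μM ψ k y) ∂μ := by
        simp_rw [twistedAverage, ← integral_conj, ← integral_const_mul, map_mul, mul_assoc]

theorem integral_mul_conj_twistedAverage_eq_integral_norm_sq [LocallyCompactSpace G]
    (hM : IsClosed (M : Set G)) [μM.IsMulLeftInvariant] (μ : Measure G) (ν : Measure (G ⧸ M))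
    (hWeil : ∀ f : G → ℂ, Continuous f → HasCompactSupport f →
      ∫ x, f x ∂μ = ∫ q : G ⧸ M, ∫ p : M, f (q.out * (p : G)) ∂μM ∂ν)
    (hψ : LocallyIntegrable (fun p ↦ (ψ p : ℂ)) μM) {k : G → ℂ} (hk : Continuous k)
    (hkc : HasCompactSupport k) :
    ∫ y, k y * conj (twistedAverage μM ψ k y) ∂μ
      = ((∫ q : G ⧸ M, ‖twistedAverage μM ψ k q.out‖ ^ 2 ∂ν : ℝ) : ℂ) := by
  have hA := continuous_twistedAverage μM ψ hM hψ hk hkc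
  rw [hWeil (fun y ↦ k y * conj (twistedAverage μM ψ k y)) (by fun_prop) hkc.mul_right,
    ← integral_complex_ofReal]
  congr 1
  ext q
  calc ∫ p : M, k (q.out * p) * conj (twistedAverage μM ψ k (q.out * p)) ∂μM
      = ∫ p : M, k (q.out * p) * ψ p * conj (twistedAverage μM ψ k q.out) ∂μM := by
        simp_rw [twistedAverage_mul_coe, map_mul, Complex.conj_conj, mul_assoc]
    _ = twistedAverage μM ψ k q.out * conj (twistedAverage μM ψ k q.out) :=
        integral_mul_const _ _
    _ = ((‖twistedAverage μM ψ k q.out‖ ^ 2 : ℝ) : ℂ) := by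
        rw [RCLike.mul_conj]; norm_cast

end TwistedAverage

section Convolution

variable {G : Type*} [Group G] [TopologicalSpace G] [IsTopologicalGroup G]
  [LocallyCompactSpace G] [MeasurableSpace G] [BorelSpace G] (μ : Measure G)
  {f : G → ℂ}

theorem continuous_integral_mul_conj_of_hasCompactSupport [IsFiniteMeasureOnCompacts μ]
    (hf : Continuous f) (hfc : HasCompactSupport f) :
    Continuous fun g ↦ ∫ y, f (g * y) * conj (f y) ∂μ := by
  refine continuous_integral_mul_of_locallyIntegrable (F := fun g y ↦ f (g * y))
    (by fun_prop) (fun s hs ↦ ⟨s⁻¹ * tsupport f, hs.inv.mul hfc, fun g hg y hy ↦ ?_⟩)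
    (by fun_prop : Continuous fun y ↦ conj (f y)).locallyIntegrable
  exact image_eq_zero_of_notMem_tsupport fun h ↦
    hy ⟨g⁻¹, inv_mem_inv.2 hg, g * y, h, by group⟩

theorem integral_conjugate_mul_conj_eq [μ.IsHaarMeasure] [μ.IsMulRightInvariant]
    (hfc : HasCompactSupport f) (x g : G) :
    ∫ y, f (x * g * x⁻¹ * y) * conj (f y) ∂μ
      = ∫ y, f (x * y⁻¹) * conj (f (x * (y * g)⁻¹)) ∂μ := by
  set φ : G → ℂ := fun y ↦ f (x * g * x⁻¹ * y) * conj (f y)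
  have hφ : HasCompactSupport φ := HasCompactSupport.mul_left (hfc.comp_left (map_zero conj))
  have hφ' : HasCompactSupport fun z ↦ φ (x * g⁻¹ * z) :=
    hφ.comp_homeomorph (Homeomorph.mulLeft (x * g⁻¹))
  calc ∫ y, φ y ∂μ = ∫ z, φ (x * g⁻¹ * z) ∂μ := (integral_mul_left_eq_self φ _).symm
    _ = ∫ z, φ (x * g⁻¹ * z⁻¹) ∂μ :=
        (integral_comp_inv_of_hasCompactSupport μ hφ').symm
    _ = ∫ y, f (x * y⁻¹) * conj (f (x * (y * g)⁻¹)) ∂μ := by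
      refine integral_congr_ae (Eventually.of_forall fun z ↦ ?_)
      simp only [φ]
      rw [show x * g * x⁻¹ * (x * g⁻¹ * z⁻¹) = x * z⁻¹ by group,
        show x * g⁻¹ * z⁻¹ = x * (z * g)⁻¹ by group]

theorem integral_convolution_mul_conj_eq_integral_norm_sq [μ.IsHaarMeasure]
    [μ.IsMulRightInvariant] {M : Subgroup G} (hM : IsClosed (M : Set G)) (μM : Measure M)
    [μM.IsHaarMeasure] (ν : Measure (G ⧸ M))
    (hWeil : ∀ f : G → ℂ, Continuous f → HasCompactSupport f →
      ∫ x, f x ∂μ = ∫ q : G ⧸ M, ∫ p : M, f (q.out * (p : G)) ∂μM ∂ν)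
    (ψ : M →* Circle) (hf : Continuous f) (hfc : HasCompactSupport f) (x : G) :
    ∫ p : M, (∫ y, f (x * p * x⁻¹ * y) * conj (f y) ∂μ) * conj (ψ p : ℂ) ∂μM
      = ((∫ q : G ⧸ M,
          ‖twistedAverage μM ψ (fun y ↦ f (x * y⁻¹)) q.out‖ ^ 2 ∂ν : ℝ) : ℂ) := by
  have : LocallyCompactSpace M := hM.locallyCompactSpace
  set k : G → ℂ := fun y ↦ f (x * y⁻¹)
  have hk : Continuous k := by fun_prop
  have hkc : HasCompactSupport k :=
    hfc.comp_homeomorph ((Homeomorph.inv G).trans (Homeomorph.mulLeft x))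
  by_cases hψ : LocallyIntegrable (fun p ↦ (ψ p : ℂ)) μM
  · simp_rw [integral_conjugate_mul_conj_eq μ hfc x]
    rw [integral_integral_mul_conj_eq_integral_mul_conj_twistedAverage μM ψ hM μ hψ hk hkc,
      integral_mul_conj_twistedAverage_eq_integral_norm_sq μM ψ hM μ ν hWeil hψ hk hkc]
  · have hA (y : G) : twistedAverage μM ψ k y = 0 :=
      ψ.integral_mul_coe_circle_eq_zero_of_not_locallyIntegrable hψ (by fun_prop)
    set c : M → ℂ := fun p ↦ ∫ y, f (x * p * x⁻¹ * y) * conj (f y) ∂μ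
    have hc : Continuous c :=
      (continuous_integral_mul_conj_of_hasCompactSupport μ hf hfc).comp (by fun_prop)
    calc ∫ p, c p * conj (ψ p : ℂ) ∂μM = conj (∫ p, conj (c p) * ψ p ∂μM) := by
          rw [← integral_conj]; simp
      _ = _ := by
          rw [ψ.integral_mul_coe_circle_eq_zero_of_not_locallyIntegrable hψ
            (g := fun p ↦ conj (c p)) (continuous_conj.comp hc)]
          simp [hA]

end Convolution

theorem statement12_general {G : Type*} [Group G] [TopologicalSpace G] [IsTopologicalGroup G]
    [LocallyCompactSpace G] [MeasurableSpace G] [BorelSpace G]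
    (μ : Measure G) [μ.IsHaarMeasure] [μ.IsMulRightInvariant]
    (M : Subgroup G) (hMclosed : IsClosed (M : Set G))
    (μM : Measure M) [μM.IsHaarMeasure]
    (ν : Measure (G ⧸ M))
    (hWeil : ∀ f : G → ℂ, Continuous f → HasCompactSupport f →
      ∫ x, f x ∂μ = ∫ q : G ⧸ M, ∫ p : M, f (q.out * (p : G)) ∂μM ∂ν)
    (L : M → ℝ) (hL : ∀ p q : M, L (p * q) = L p + L q)
    (f : G → ℂ) (hf : Continuous f) (hfc : HasCompactSupport f) :
    (∫ q : G ⧸ M, ∫ p : M,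
        (∫ y, f ((q.out * (p : G) * q.out⁻¹) * y) * (starRingEnd ℂ) (f y) ∂μ) *
          Complex.exp (Complex.I * L p) ∂μM ∂ν)
      = (((∫ x : G ⧸ M, ∫ y : G ⧸ M,
            ‖∫ p : M, f (x.out * (p : G)⁻¹ * y.out⁻¹) *
              Complex.exp (-(Complex.I * L p)) ∂μM‖ ^ 2 ∂ν ∂ν : ℝ)) : ℂ) ∧
    0 ≤ ∫ x : G ⧸ M, ∫ y : G ⧸ M,
          ‖∫ p : M, f (x.out * (p : G)⁻¹ * y.out⁻¹) *
            Complex.exp (-(Complex.I * L p)) ∂μM‖ ^ 2 ∂ν ∂ν := by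
  set ψ := (expCharacter L hL)⁻¹
  have hψ (p : M) : Complex.exp (-(Complex.I * L p)) = ψ p := by
    simp [ψ, expCharacter, Circle.coe_exp, mul_comm, Complex.exp_neg]
  have hψconj (p : M) : Complex.exp (Complex.I * L p) = conj (ψ p : ℂ) := by
    rw [← hψ, ← Complex.exp_conj]; simp
  have hA (x y : G) :
      ∫ p : M, f (x * (p : G)⁻¹ * y⁻¹) * Complex.exp (-(Complex.I * L p)) ∂μM
        = twistedAverage μM ψ (fun z ↦ f (x * z⁻¹)) y := by
    simp_rw [twistedAverage, mul_inv_rev, ← mul_assoc, hψ]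
  simp_rw [hA, hψconj]
  refine ⟨?_, integral_nonneg fun _ ↦ integral_nonneg fun _ ↦ by positivity⟩
  rw [← integral_complex_ofReal]
  exact integral_congr_ae (Eventually.of_forall fun q ↦
    integral_convolution_mul_conj_eq_integral_norm_sq μ hMclosed μM ν hWeil ψ hf hfc q.out)

/-- Let `G` be a connected nilpotent Lie group (in particular unimodular, as
is the subgroup `M = exp 𝕞` corresponding to a polarizing subalgebra `𝕞` subordinate to
`ℓ ∈ 𝔤*`), and suppose the Kirillov character of the orbit `O` through `ℓ` is given by
`χ_O(f) = ∫_{G/M} ∫_M f(xpx⁻¹) e^{iℓ(log p)} dp dxM`, where `L = ℓ ∘ log : M → ℝ` is additive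
(since `ℓ` kills `[𝕞,𝕞]`).  Then for every (smooth compactly supported) `f`,
`χ_O(f*f*) = ∫_{G/M}∫_{G/M} |∫_M f(xp⁻¹y⁻¹) e^{−iℓ(log p)} dp|² dyM dxM ≥ 0`. -/
theorem statement12 {G : Type*} [Group G] [TopologicalSpace G] [IsTopologicalGroup G]
    [LocallyCompactSpace G] [MeasurableSpace G] [BorelSpace G]
    (μ : Measure G) [μ.IsHaarMeasure] [μ.IsMulRightInvariant]
    (M : Subgroup G) (hMclosed : IsClosed (M : Set G))
    (μM : Measure M) [μM.IsHaarMeasure] [μM.IsMulRightInvariant]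
    (ν : Measure (G ⧸ M)) [SMulInvariantMeasure G (G ⧸ M) ν]
    (hWeil : ∀ f : G → ℂ, Continuous f → HasCompactSupport f →
      ∫ x, f x ∂μ = ∫ q : G ⧸ M, ∫ p : M, f (q.out * (p : G)) ∂μM ∂ν)
    (L : M → ℝ) (hL : ∀ p q : M, L (p * q) = L p + L q)
    (f : G → ℂ) (hf : Continuous f) (hfc : HasCompactSupport f) :
    (∫ q : G ⧸ M, ∫ p : M,
        (∫ y, f ((q.out * (p : G) * q.out⁻¹) * y) * (starRingEnd ℂ) (f y) ∂μ) *
          Complex.exp (Complex.I * L p) ∂μM ∂ν)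
      = (((∫ x : G ⧸ M, ∫ y : G ⧸ M,
            ‖∫ p : M, f (x.out * (p : G)⁻¹ * y.out⁻¹) *
              Complex.exp (-(Complex.I * L p)) ∂μM‖ ^ 2 ∂ν ∂ν : ℝ)) : ℂ) ∧
    0 ≤ ∫ x : G ⧸ M, ∫ y : G ⧸ M,
          ‖∫ p : M, f (x.out * (p : G)⁻¹ * y.out⁻¹) *
            Complex.exp (-(Complex.I * L p)) ∂μM‖ ^ 2 ∂ν ∂ν :=
  statement12_general μ M hMclosed μM ν hWeil L hL f hf hfc
end

section
/- Let G be a locally compact group with closed subgroups K ⊆ H ⊆ G, and let ρ_(G,K), ρ_(G,H), ρ_(H,K) be rho-functions for the respective pairs, with associated quasi-invariant measures on the quotients. Then for every f ∈ C_c(G/K), ∫_{G/K} f(g) dgK = ∫_{G/H} ∫_{H/K} f(xh) · ρ_(G,K)(xh) / (ρ_(G,H)(xh) ρ_(H,K)(h)) dhK dxH. -/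
/-!
By Bruhat's lemma every `f ∈ C_c(G/K)` is a `K`-average `xK ↦ ∫_K F(xk) dk` of some
`F ∈ C_c(G)`: take `F = (f ∘ π) · χ / a`, where `χ` is a bump function equal to `1` on a compact
lift of `supp f` and `a(x) = ∫_K χ(xk) dk`, which is positive over `supp f`. Then
`∫_{G/K} f = ∫_G F ρ_(G,K)`. Applying the quotient formula of `(G, H)` to `F ρ_(G,K) / ρ_(G,H)`
and that of `(H, K)` to its `H`-fibres, the innermost `K`-integral collapses back to a value of
`f`, because `ρ_(G,K) / (ρ_(G,H) ρ_(H,K))` is right `K`-invariant: the modular factors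
`Δ_K/Δ_G`, `Δ_H/Δ_G` and `Δ_K/Δ_H` cancel.
-/

open MeasureTheory

open Set Function

open scoped Pointwise

theorem IsOpenMap.exists_isCompact_subset_image {X Y : Type*} [TopologicalSpace X]
    [TopologicalSpace Y] [WeaklyLocallyCompactSpace X] {π : X → Y} (hπ : IsOpenMap π)
    (hsurj : Surjective π) {S : Set Y} (hS : IsCompact S) :
    ∃ C : Set X, IsCompact C ∧ S ⊆ π '' C := by
  choose x hx using hsurj
  choose V hVc hVn using fun y => exists_compact_mem_nhds (x y)
  obtain ⟨t, -, ht⟩ := hS.elim_nhds_subcover (fun y => π '' interior (V y)) fun y _ =>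
    (hπ _ isOpen_interior).mem_nhds ⟨x y, mem_interior_iff_mem_nhds.2 (hVn y), hx y⟩
  refine ⟨⋃ y ∈ t, V y, t.finite_toSet.isCompact_biUnion fun y _ => hVc y, ht.trans ?_⟩
  rw [image_iUnion₂]
  exact iUnion₂_mono fun y _ => image_mono interior_subset

section ClosedSubgroup

variable {G : Type*} [Group G] [TopologicalSpace G] [IsTopologicalGroup G] {K : Subgroup G}

theorem HasCompactSupport.comp_mul_subgroup {M : Type*} [Zero M] (hK : IsClosed (K : Set G))
    {g : G → M} (hg : HasCompactSupport g) (x : G) : HasCompactSupport fun k : K => g (x * k) :=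
  hg.comp_isClosedEmbedding ((Homeomorph.mulLeft x).isClosedEmbedding.comp
    hK.isClosedEmbedding_subtypeVal)

variable [MeasurableSpace G]

theorem integral_comp_mul_eq_integral_quotient_of_rho {H : Subgroup G} (hKH : K ≤ H)
    (hH : IsClosed (H : Set G)) {μH : Measure H} {μK : Measure K} {ρ : H → ℝ}
    {ν : Measure (H ⧸ K.subgroupOf H)} (hρcont : Continuous ρ) (hρpos : ∀ h, 0 < ρ h)
    (hν : ∀ f : H → ℝ, Continuous f → HasCompactSupport f →
      ∫ h, f h * ρ h ∂μH = ∫ q, ∫ k : K, f (q.out * ⟨(k : G), hKH k.2⟩) ∂μK ∂ν)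
    {Φ : G → ℝ} (hΦ : Continuous Φ) (hΦc : HasCompactSupport Φ) (x : G) :
    ∫ h : H, Φ (x * h) ∂μH =
      ∫ q, ∫ k : K, Φ (x * q.out * k) / ρ (q.out * ⟨(k : G), hKH k.2⟩) ∂μK ∂ν := by
  have hcont : Continuous fun h : H => Φ (x * h) / ρ h :=
    (hΦ.comp ((continuous_const_mul x).comp continuous_subtype_val)).div hρcont
      fun h => (hρpos h).ne'
  have hc : HasCompactSupport fun h : H => Φ (x * h) / ρ h :=
    (hΦc.comp_mul_subgroup hH x).mono fun h hh => (div_ne_zero_iff.1 hh).1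
  calc ∫ h : H, Φ (x * h) ∂μH = ∫ h : H, Φ (x * h) / ρ h * ρ h ∂μH := by
        congr with h; rw [div_mul_cancel₀ _ (hρpos h).ne']
    _ = _ := by simp only [hν _ hcont hc, Subgroup.coe_mul, mul_assoc]

variable [BorelSpace G]

theorem continuous_integral_comp_mul_subgroup [WeaklyLocallyCompactSpace G] {E : Type*}
    [NormedAddCommGroup E] [NormedSpace ℝ E] (hK : IsClosed (K : Set G)) (μ : Measure K)
    [IsFiniteMeasureOnCompacts μ] {g : G → E} (hg : Continuous g) (hgc : HasCompactSupport g) :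
    Continuous fun x => ∫ k : K, g (x * k) ∂μ := by
  refine continuous_iff_continuousAt.2 fun x₀ => ?_
  obtain ⟨t, htc, ht⟩ := exists_compact_mem_nhds x₀
  have hcompact : IsCompact (((↑) : K → G) ⁻¹' (t⁻¹ * tsupport g)) :=
    hK.isClosedEmbedding_subtypeVal.isCompact_preimage (htc.inv.mul hgc)
  refine (continuousOn_integral_of_compact_support hcompact (by fun_prop) ?_).continuousAt ht
  intro x k hx hk
  by_contra hne
  exact hk ⟨x⁻¹, inv_mem_inv.2 hx, x * k, subset_tsupport _ hne, by group⟩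

theorem integral_comp_mul_subgroup_mul {E : Type*} [NormedAddCommGroup E] [NormedSpace ℝ E]
    (μ : Measure K) [μ.IsMulLeftInvariant] (g : G → E) (x : G) (k : K) :
    ∫ k', g (x * k * k') ∂μ = ∫ k', g (x * k') ∂μ := by
  simpa only [Subgroup.coe_mul, mul_assoc] using
    integral_mul_left_eq_self (fun k' : K => g (x * k')) k

theorem exists_integral_comp_mul_subgroup_eq [LocallyCompactSpace G] (hK : IsClosed (K : Set G))
    (μ : Measure K) [μ.IsHaarMeasure] {f : G ⧸ K → ℝ} (hf : Continuous f)
    (hfc : HasCompactSupport f) :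
    ∃ F : G → ℝ, Continuous F ∧ HasCompactSupport F ∧
      ∀ x : G, ∫ k : K, F (x * k) ∂μ = f x := by
  obtain ⟨C, hCc, hfC⟩ :=
    QuotientGroup.isOpenMap_coe.exists_isCompact_subset_image QuotientGroup.mk_surjective hfc
  obtain ⟨χ, hχC, -, hχc, hχ01⟩ :=
    exists_continuous_one_zero_of_isCompact hCc isClosed_empty (disjoint_empty C)
  set a : G → ℝ := fun x => ∫ k : K, χ (x * k) ∂μ
  have ha_pos : ∀ x : G, (x : G ⧸ K) ∈ tsupport f → 0 < a x := by
    intro x hx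
    obtain ⟨c, hc, hcx⟩ := hfC hx
    have hk : x⁻¹ * c ∈ K := QuotientGroup.eq.1 hcx.symm
    refine ((map_continuous χ).comp (by fun_prop)).integral_pos_of_hasCompactSupport_nonneg_nonzero
      (hχc.comp_mul_subgroup hK x) (fun k => (hχ01 _).1) (x := ⟨x⁻¹ * c, hk⟩) ?_
    simp [hχC hc]
  have ha_inv : ∀ (x : G) (k : K), a (x * k) = a x := integral_comp_mul_subgroup_mul μ χ
  have hfa : ∀ x : G, a x = 0 → f x = 0 := fun x h0 =>
    by_contra fun hne => (ha_pos x (subset_tsupport f hne)).ne' h0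
  refine ⟨fun x => f x * (χ x / a x), ?_,
    hχc.mono fun x hx => (div_ne_zero_iff.1 (right_ne_zero_of_mul hx)).1, fun x => ?_⟩
  · refine continuous_of_tsupport fun x hx => ?_
    have hx' : (x : G ⧸ K) ∈ tsupport f := tsupport_comp_subset_preimage f
      QuotientGroup.continuous_mk (tsupport_mul_subset_left hx)
    have ha_cont : Continuous a :=
      continuous_integral_comp_mul_subgroup hK μ (map_continuous χ) hχc
    exact (hf.comp QuotientGroup.continuous_mk).continuousAt.mul
      ((map_continuous χ).continuousAt.div ha_cont.continuousAt (ha_pos x hx').ne')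
  · have hfiber : ∀ k : K, f ↑(x * k) * (χ (x * k) / a (x * k)) = f x * (χ (x * k) / a x) :=
      fun k => by rw [QuotientGroup.mk_mul_of_mem x k.2, ha_inv]
    simp only [hfiber, integral_const_mul, integral_div]
    rcases eq_or_ne (a x) 0 with h0 | h0
    · rw [hfa x h0, zero_mul]
    · rw [div_self h0, mul_one]

end ClosedSubgroup

theorem rho_div_mul_rho_mul_right {G : Type*} [Group G] {H K : Subgroup G} (hKH : K ≤ H)
    {ΔG : G → ℝ} {ΔH : H → ℝ} {ΔK : K → ℝ} {ρGK ρGH : G → ℝ} {ρHK : H → ℝ}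
    (hρGKpos : ∀ x, 0 < ρGK x) (hρGHpos : ∀ x, 0 < ρGH x) (hρHKpos : ∀ x, 0 < ρHK x)
    (hρGK : ∀ (x : G) (k : K), ρGK (x * k) = ρGK x * ΔK k / ΔG k)
    (hρGH : ∀ (x : G) (h : H), ρGH (x * h) = ρGH x * ΔH h / ΔG h)
    (hρHK : ∀ (x : H) (k : K),
      ρHK (x * ⟨(k : G), hKH k.2⟩) = ρHK x * ΔK k / ΔH ⟨(k : G), hKH k.2⟩)
    (x : G) (h : H) (k : K) :
    ρGK (x * k) / (ρGH (x * k) * ρHK (h * ⟨(k : G), hKH k.2⟩)) =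
      ρGK x / (ρGH x * ρHK h) := by
  -- positivity of `ρGK (x * k)` and `ρGH (x * k)` forces the modular values to be nonzero
  have hGK := hρGK x k ▸ hρGKpos (x * k)
  have hGH := hρGH x ⟨k, hKH k.2⟩ ▸ hρGHpos (x * k)
  obtain ⟨⟨-, hΔK⟩, hΔG⟩ := (div_ne_zero_iff.1 hGK.ne').imp_left mul_ne_zero_iff.1
  obtain ⟨-, hΔH⟩ := mul_ne_zero_iff.1 (div_ne_zero_iff.1 hGH.ne').1
  have := (hρGHpos x).ne'
  have := (hρHKpos h).ne'
  rw [hρGK, hρGH x ⟨k, hKH k.2⟩, hρHK]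
  field_simp

theorem statement14_general {G : Type*} [Group G] [TopologicalSpace G] [IsTopologicalGroup G]
    [LocallyCompactSpace G] [MeasurableSpace G] [BorelSpace G]
    (H K : Subgroup G) (hKH : K ≤ H)
    (hHclosed : IsClosed (H : Set G)) (hKclosed : IsClosed (K : Set G))
    (μG : Measure G)
    (μH : Measure H)
    (μK : Measure K) [μK.IsHaarMeasure]
    (ΔG : G → ℝ)
    (ΔH : H → ℝ)
    (ΔK : K → ℝ)
    (ρGK ρGH : G → ℝ) (ρHK : H → ℝ)
    (hρGKcont : Continuous ρGK) (hρGKpos : ∀ x, 0 < ρGK x)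
    (hρGHcont : Continuous ρGH) (hρGHpos : ∀ x, 0 < ρGH x)
    (hρHKcont : Continuous ρHK) (hρHKpos : ∀ x, 0 < ρHK x)
    (hρGK : ∀ (x : G) (k : K), ρGK (x * k) = ρGK x * ΔK k / ΔG k)
    (hρGH : ∀ (x : G) (h : H), ρGH (x * h) = ρGH x * ΔH h / ΔG h)
    (hρHK : ∀ (x : H) (k : K), ρHK (x * ⟨(k : G), hKH k.2⟩) = ρHK x * ΔK k / ΔH ⟨(k : G), hKH k.2⟩)
    (νGK : Measure (G ⧸ K)) (νGH : Measure (G ⧸ H)) (νHK : Measure (H ⧸ K.subgroupOf H))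
    (hνGK : ∀ f : G → ℝ, Continuous f → HasCompactSupport f →
      ∫ x, f x * ρGK x ∂μG = ∫ q : G ⧸ K, ∫ k : K, f (q.out * (k : G)) ∂μK ∂νGK)
    (hνGH : ∀ f : G → ℝ, Continuous f → HasCompactSupport f →
      ∫ x, f x * ρGH x ∂μG = ∫ q : G ⧸ H, ∫ h : H, f (q.out * (h : G)) ∂μH ∂νGH)
    (hνHK : ∀ f : H → ℝ, Continuous f → HasCompactSupport f →
      ∫ x, f x * ρHK x ∂μH
        = ∫ q : H ⧸ K.subgroupOf H, ∫ k : K, f (q.out * ⟨(k : G), hKH k.2⟩) ∂μK ∂νHK)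
    (f : G ⧸ K → ℝ) (hf : Continuous f) (hfc : HasCompactSupport f) :
    ∫ q, f q ∂νGK
      = ∫ x : G ⧸ H, ∫ y : H ⧸ K.subgroupOf H,
          f (QuotientGroup.mk (x.out * ((y.out : H) : G))) *
            (ρGK (x.out * ((y.out : H) : G)) /
              (ρGH (x.out * ((y.out : H) : G)) * ρHK y.out)) ∂νHK ∂νGH := by
  obtain ⟨F, hFcont, hFc, hF⟩ := exists_integral_comp_mul_subgroup_eq hKclosed μK hf hfc
  have hρ : Continuous fun x => ρGK x / ρGH x :=
    hρGKcont.div hρGHcont fun x => (hρGHpos x).ne'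
  have hfiber : ∀ (x : G) (y : H ⧸ K.subgroupOf H),
      ∫ k : K, F (x * y.out * k) * (ρGK (x * y.out * k) / ρGH (x * y.out * k)) /
        ρHK (y.out * ⟨(k : G), hKH k.2⟩) ∂μK =
      f (x * y.out : G) * (ρGK (x * y.out) / (ρGH (x * y.out) * ρHK y.out)) := by
    intro x y
    simp only [mul_div_assoc, div_div,
      rho_div_mul_rho_mul_right hKH hρGKpos hρGHpos hρHKpos hρGK hρGH hρHK]
    rw [integral_mul_const, hF]
  calc ∫ q, f q ∂νGK = ∫ x, F x * ρGK x ∂μG := by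
        simp only [hνGK F hFcont hFc, hF, QuotientGroup.out_eq']
    _ = ∫ x, F x * (ρGK x / ρGH x) * ρGH x ∂μG := by
        congr with x; rw [mul_assoc, div_mul_cancel₀ _ (hρGHpos x).ne']
    _ = ∫ q : G ⧸ H, ∫ h : H,
          F (q.out * h) * (ρGK (q.out * h) / ρGH (q.out * h)) ∂μH ∂νGH :=
        hνGH _ (hFcont.mul hρ) hFc.mul_right
    _ = _ := by
        congr with q
        refine (integral_comp_mul_eq_integral_quotient_of_rho hKH hHclosed hρHKcont hρHKpos hνHK
          (hFcont.mul hρ) hFc.mul_right q.out).trans ?_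
        congr with y
        exact hfiber _ _

/-- chain rule for quasi-invariant quotient integration.  Let `K ⊆ H ⊆ G` be
closed subgroups of a locally compact group `G`, with rho-functions `ρ_(G,K)`, `ρ_(G,H)`,
`ρ_(H,K)` for the three pairs and associated quasi-invariant measures on the quotients
(normalized by the Mackey–Bruhat formula).  Then for every `f ∈ C_c(G/K)`,
`∫_{G/K} f = ∫_{G/H} ∫_{H/K} f(xh) ρ_(G,K)(xh)/(ρ_(G,H)(xh) ρ_(H,K)(h)) dhK dxH`. -/
theorem statement14 {G : Type*} [Group G] [TopologicalSpace G] [IsTopologicalGroup G]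
    [LocallyCompactSpace G] [MeasurableSpace G] [BorelSpace G]
    (H K : Subgroup G) (hKH : K ≤ H)
    (hHclosed : IsClosed (H : Set G)) (hKclosed : IsClosed (K : Set G))
    (μG : Measure G) [μG.IsHaarMeasure]
    (μH : Measure H) [μH.IsHaarMeasure]
    (μK : Measure K) [μK.IsHaarMeasure]
    (ΔG : G → ℝ) (hΔG : ∀ y : G, Measure.map (fun x => x * y) μG = (ENNReal.ofReal (ΔG y))⁻¹ • μG)
    (ΔH : H → ℝ) (hΔH : ∀ y : H, Measure.map (fun x => x * y) μH = (ENNReal.ofReal (ΔH y))⁻¹ • μH)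
    (ΔK : K → ℝ) (hΔK : ∀ y : K, Measure.map (fun x => x * y) μK = (ENNReal.ofReal (ΔK y))⁻¹ • μK)
    (ρGK ρGH : G → ℝ) (ρHK : H → ℝ)
    (hρGKcont : Continuous ρGK) (hρGKpos : ∀ x, 0 < ρGK x)
    (hρGHcont : Continuous ρGH) (hρGHpos : ∀ x, 0 < ρGH x)
    (hρHKcont : Continuous ρHK) (hρHKpos : ∀ x, 0 < ρHK x)
    (hρGK : ∀ (x : G) (k : K), ρGK (x * k) = ρGK x * ΔK k / ΔG k)
    (hρGH : ∀ (x : G) (h : H), ρGH (x * h) = ρGH x * ΔH h / ΔG h)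
    (hρHK : ∀ (x : H) (k : K), ρHK (x * ⟨(k : G), hKH k.2⟩) = ρHK x * ΔK k / ΔH ⟨(k : G), hKH k.2⟩)
    (νGK : Measure (G ⧸ K)) (νGH : Measure (G ⧸ H)) (νHK : Measure (H ⧸ K.subgroupOf H))
    (hνGK : ∀ f : G → ℝ, Continuous f → HasCompactSupport f →
      ∫ x, f x * ρGK x ∂μG = ∫ q : G ⧸ K, ∫ k : K, f (q.out * (k : G)) ∂μK ∂νGK)
    (hνGH : ∀ f : G → ℝ, Continuous f → HasCompactSupport f →
      ∫ x, f x * ρGH x ∂μG = ∫ q : G ⧸ H, ∫ h : H, f (q.out * (h : G)) ∂μH ∂νGH)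
    (hνHK : ∀ f : H → ℝ, Continuous f → HasCompactSupport f →
      ∫ x, f x * ρHK x ∂μH
        = ∫ q : H ⧸ K.subgroupOf H, ∫ k : K, f (q.out * ⟨(k : G), hKH k.2⟩) ∂μK ∂νHK)
    (f : G ⧸ K → ℝ) (hf : Continuous f) (hfc : HasCompactSupport f) :
    ∫ q, f q ∂νGK
      = ∫ x : G ⧸ H, ∫ y : H ⧸ K.subgroupOf H,
          f (QuotientGroup.mk (x.out * ((y.out : H) : G))) *
            (ρGK (x.out * ((y.out : H) : G)) /
              (ρGH (x.out * ((y.out : H) : G)) * ρHK y.out)) ∂νHK ∂νGH :=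
  statement14_general H K hKH hHclosed hKclosed μG μH μK ΔG ΔH ΔK ρGK ρGH ρHK hρGKcont hρGKpos
    hρGHcont hρGHpos hρHKcont hρHKpos hρGK hρGH hρHK νGK νGH νHK hνGK hνGH hνHK f hf hfc
end

section
/- Let 𝔤 = sl(2,ℝ) and 𝔪 the subalgebra of traceless upper triangular matrices. Then for every W ∈ 𝔪, det(sinh(ad_𝔤 W / 2) / (ad_𝔤 W / 2)) = [det(sinh(ad_𝔪 W / 2) / (ad_𝔪 W / 2))]². -/
/-!
Both `ad_𝔪 W` and `ad_𝔤 W` are upper triangular, with diagonals `(2a, 0)` and `(2a, 0, -2a)`.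
For an upper triangular `A` the series `sinh(A)/A = ∑ A^{2n}/(2n+1)!` is upper triangular
with diagonal entries `sinhc (A i i)`, so its determinant is `∏ i, sinhc (A i i)`. Since
`sinhc` is even and `sinhc 0 = 1`, both sides equal `sinhc a ^ 2`.
-/

/-- `sinhcDet A = det(sinh(A)/A)`, defined through the everywhere-convergent power series
`sinh(A)/A = ∑ A^{2n}/(2n+1)!`. -/
noncomputable def sinhcDet {k : ℕ} (A : Matrix (Fin k) (Fin k) ℝ) : ℝ :=
  (∑' n : ℕ, ((Nat.factorial (2 * n + 1) : ℝ))⁻¹ • A ^ (2 * n)).det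

open Nat Matrix

theorem summable_sinhc_series {𝔸 : Type*} [NormedRing 𝔸] [NormedAlgebra ℝ 𝔸] [CompleteSpace 𝔸]
    (x : 𝔸) : Summable fun n : ℕ => ((2 * n + 1)! : ℝ)⁻¹ • x ^ (2 * n) := by
  -- The `n = 0` term is dropped: `‖x ^ 0‖ ≤ ‖x‖ ^ 0` would need `NormOneClass 𝔸`.
  rw [← summable_nat_add_iff 1]
  refine .of_norm_bounded ((Real.summable_pow_div_factorial (‖x‖ ^ 2)).comp_injective
    (add_left_injective 1)) fun n => ?_
  have hfact : ((n + 1)! : ℝ) ≤ (2 * (n + 1) + 1)! := by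
    exact_mod_cast factorial_le (by omega)
  calc ‖((2 * (n + 1) + 1)! : ℝ)⁻¹ • x ^ (2 * (n + 1))‖
      ≤ ((2 * (n + 1) + 1)! : ℝ)⁻¹ * ‖x‖ ^ (2 * (n + 1)) := by
        rw [norm_smul, Real.norm_of_nonneg (by positivity)]
        exact mul_le_mul_of_nonneg_left (norm_pow_le' x (by omega)) (by positivity)
    _ ≤ ((n + 1)! : ℝ)⁻¹ * ‖x‖ ^ (2 * (n + 1)) := by gcongr
    _ = (‖x‖ ^ 2) ^ (n + 1) / (n + 1)! := by rw [pow_mul]; ring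

theorem Matrix.summable_sinhc_series {n : Type*} [Fintype n] [DecidableEq n] (A : Matrix n n ℝ) :
    Summable fun k : ℕ => ((2 * k + 1)! : ℝ)⁻¹ • A ^ (2 * k) :=
  letI := Matrix.linftyOpNormedRing (n := n) (α := ℝ)
  letI := Matrix.linftyOpNormedAlgebra (R := ℝ) (n := n) (α := ℝ)
  _root_.summable_sinhc_series A

theorem Matrix.BlockTriangular.smul {m R α S : Type*} [LT α] [Zero R] [SMulZeroClass S R]
    {b : m → α} {M : Matrix m m R} (hM : M.BlockTriangular b) (c : S) :
    (c • M).BlockTriangular b :=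
  fun _ _ hij => by rw [smul_apply, hM hij, smul_zero]

namespace Matrix

variable {ι l m R : Type*} [AddCommMonoid R] [TopologicalSpace R] [T2Space R]

theorem tsum_apply {f : ι → Matrix l m R} (hf : Summable f) (i : l) (j : m) :
    (∑' k, f k) i j = ∑' k, f k i j :=
  (congr_fun (_root_.tsum_apply hf) j).trans (_root_.tsum_apply (Pi.summable.1 hf i))

theorem IsUpperTriangular.tsum [LT m] {f : ι → Matrix m m R} (hf : Summable f)
    (h : ∀ k, (f k).IsUpperTriangular) : (∑' k, f k).IsUpperTriangular := fun i j hij => by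
  simp only [Matrix.tsum_apply hf, h _ hij, tsum_zero]

end Matrix

namespace Matrix.IsUpperTriangular

variable {m R : Type*} [Fintype m] [LinearOrder m] [Semiring R] {M N : Matrix m m R}

theorem mul_apply_self (hM : M.IsUpperTriangular) (hN : N.IsUpperTriangular) (i : m) :
    (M * N) i i = M i i * N i i := by
  rw [mul_apply]
  refine Finset.sum_eq_single i (fun k _ hki => ?_) (by simp)
  rcases hki.lt_or_gt with hk | hk
  · rw [hM hk, zero_mul]
  · rw [hN hk, mul_zero]

theorem pow_apply_self [DecidableEq m] (hM : M.IsUpperTriangular) (i : m) (k : ℕ) :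
    (M ^ k) i i = M i i ^ k := by
  induction k with
  | zero => simp
  | succ k ih => rw [pow_succ, mul_apply_self (hM.pow k) hM, ih, pow_succ]

end Matrix.IsUpperTriangular

noncomputable def sinhc (x : ℝ) : ℝ := ∑' n : ℕ, ((2 * n + 1)! : ℝ)⁻¹ * x ^ (2 * n)

theorem sinhc_zero : sinhc 0 = 1 := by
  rw [sinhc, tsum_eq_single 0 fun n hn => by simp [hn]]
  simp

theorem sinhc_neg (x : ℝ) : sinhc (-x) = sinhc x := by
  simp only [sinhc, pow_mul, neg_sq]

theorem sinhcDet_of_isUpperTriangular {k : ℕ} {A : Matrix (Fin k) (Fin k) ℝ}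
    (hA : A.IsUpperTriangular) : sinhcDet A = ∏ i, sinhc (A i i) := by
  have hs := A.summable_sinhc_series
  rw [sinhcDet, det_of_isUpperTriangular (.tsum hs fun n => (hA.pow _).smul _)]
  refine Finset.prod_congr rfl fun i _ => ?_
  simp only [Matrix.tsum_apply hs, Matrix.smul_apply, hA.pow_apply_self, smul_eq_mul, sinhc]

/-- In the bases `{X+Y, H}` of `𝔪` and `{X+Y, H, X}` of `𝔤`, where `W = aH + b(X+Y)`,
`Am` and `Ag` are the matrices of `ad_𝔪 W` and `ad_𝔤 W`. -/
theorem statement17 (a b : ℝ)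
    (Am : Matrix (Fin 2) (Fin 2) ℝ) (hAm : Am = !![2 * a, -2 * b; 0, 0])
    (Ag : Matrix (Fin 3) (Fin 3) ℝ)
    (hAg : Ag = !![2 * a, -2 * b, 2 * a; 0, 0, 2 * b; 0, 0, -2 * a]) :
    sinhcDet ((1 / 2 : ℝ) • Ag) = (sinhcDet ((1 / 2 : ℝ) • Am)) ^ 2 := by
  have hm : Am.IsUpperTriangular := by
    intro i j hij
    fin_cases i <;> fin_cases j <;> simp [hAm] at hij ⊢
  have hg : Ag.IsUpperTriangular := by
    intro i j hij
    fin_cases i <;> fin_cases j <;> simp [hAg] at hij ⊢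
  rw [sinhcDet_of_isUpperTriangular (hm.smul _), sinhcDet_of_isUpperTriangular (hg.smul _),
    Fin.prod_univ_two, Fin.prod_univ_three, hAm, hAg]
  simp [sinhc_zero, sinhc_neg, sq]
end
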